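/- arXiv:1705.05675 — 2 statements merged into one kernel-verified Lean document; each statement's English description precedes it below -/
import Mathlib

section
/- For all natural numbers a, b, c, d, m, we have ∑_{k=0}^{a} C(a,k)·C(b,m+k)·C(k,c)·C(m+k,d) = C(a+b−c−d, m+a−d)·C(a,c)·C(b,d). -/
/-- Binomial coefficient for integers: `C x y` is the usual binomial coefficient
when `0 ≤ y ≤ x`, and `0` otherwise. -/
def C (x y : ℤ) : ℤ := if 0 ≤ y ∧ y ≤ x then (x.toNat.choose y.toNat : ℤ) else 0

/-!
Trinomial revision `C(x,y) C(y,z) = C(x,z) C(x-z,y-z)`, applied to `C(a,k) C(k,c)` and to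
`C(b,m+k) C(m+k,d)`, pulls out the factor `C(a,c) C(b,d)` and leaves
`∑ₖ C(a-c,k-c) C(b-d,m+k-d)`. Reflecting the second factor to `C(b-d,(b-m)-k)` makes this a
Chu–Vandermonde convolution, which sums to `C(a+b-c-d,b-m-c)`, the reflection of
`C(a+b-c-d,m+a-d)`. The extended convention makes all three identities hold without side
conditions, so out-of-range terms simply vanish.
-/

open Finset

lemma C_of_neg {x y : ℤ} (hy : y < 0) : C x y = 0 := if_neg (by omega)

lemma C_of_lt {x y : ℤ} (h : x < y) : C x y = 0 := if_neg (by omega)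

lemma C_natCast (n k : ℕ) : C n k = n.choose k := by
  rcases le_or_gt k n with h | h
  · simp [C, h]
  · rw [C_of_lt (by omega), Nat.choose_eq_zero_of_lt h, Nat.cast_zero]

lemma C_natCast_add_one (n : ℕ) (y : ℤ) : C (n + 1) y = C n y + C n (y - 1) := by
  rcases lt_or_ge y 0 with hy | hy
  · rw [C_of_neg hy, C_of_neg hy, C_of_neg (by omega), add_zero]
  lift y to ℕ using hy
  rw [← Nat.cast_add_one, C_natCast, C_natCast]
  cases y with
  | zero => rw [C_of_neg (by omega)]; simp
  | succ k =>
    rw [Nat.cast_succ, add_sub_cancel_right, C_natCast, Nat.choose_succ_succ', Nat.cast_add,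
      add_comm]

lemma C_symm (x y : ℤ) : C x y = C x (x - y) := by
  by_cases h : 0 ≤ y ∧ y ≤ x
  · rw [C, if_pos h, C, if_pos (by omega), ← Nat.choose_symm (by omega : y.toNat ≤ x.toNat)]
    congr 3
    omega
  · rw [C, if_neg h, C, if_neg (by omega)]

lemma C_mul_C (x y z : ℤ) : C x y * C y z = C x z * C (x - z) (y - z) := by
  by_cases h : 0 ≤ z ∧ z ≤ y ∧ y ≤ x
  · simp only [C, if_pos (show 0 ≤ y ∧ y ≤ x by omega), if_pos (show 0 ≤ z ∧ z ≤ y by omega),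
      if_pos (show 0 ≤ z ∧ z ≤ x by omega), if_pos (show 0 ≤ y - z ∧ y - z ≤ x - z by omega)]
    rw [show (x - z).toNat = x.toNat - z.toNat by omega,
      show (y - z).toNat = y.toNat - z.toNat by omega, ← Nat.cast_mul, ← Nat.cast_mul,
      Nat.choose_mul (by omega)]
  obtain hz | hyz | hxy : z < 0 ∨ y < z ∨ x < y := by omega
  · rw [C_of_neg hz, C_of_neg hz, mul_zero, zero_mul]
  · rw [C_of_lt hyz, C_of_neg (by omega : y - z < 0), mul_zero, mul_zero]
  · rw [C_of_lt hxy, C_of_lt (by omega : x - z < y - z), zero_mul, mul_zero]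

lemma sum_range_C_mul_C (n p : ℕ) (q : ℤ) :
    ∑ j ∈ range (n + 1), C n j * C p (q - j) = C (n + p) q := by
  induction n generalizing q with
  | zero => simp [C]
  | succ n ih =>
    have shifted : ∑ j ∈ range (n + 2), C n ((j : ℤ) - 1) * C p (q - j) = C (n + p) (q - 1) := by
      rw [sum_range_succ', C_of_neg (by omega), zero_mul, add_zero, ← ih]
      push_cast
      simp only [add_sub_cancel_right, sub_add_eq_sub_sub_swap]
    calc ∑ j ∈ range (n + 1 + 1), C ↑(n + 1) j * C p (q - j)
        = ∑ j ∈ range (n + 2), C n j * C p (q - j)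
          + ∑ j ∈ range (n + 2), C n ((j : ℤ) - 1) * C p (q - j) := by
          rw [← sum_add_distrib]
          simp only [Nat.cast_add_one, C_natCast_add_one, add_mul]
      _ = C (n + p) q + C (n + p) (q - 1) := by
          rw [shifted, sum_range_succ, C_of_lt (by omega), zero_mul, add_zero, ih]
      _ = C (↑(n + 1) + p) q := by
          rw [← Nat.cast_add, ← C_natCast_add_one]
          push_cast
          ring_nf

lemma sum_range_C_sub_mul_C (s n p : ℕ) (q : ℤ) :
    ∑ k ∈ range (s + n + 1), C n ((k : ℤ) - s) * C p (q - k) = C (n + p) (q - s) := by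
  have vanish : ∑ k ∈ range s, C n ((k : ℤ) - s) * C p (q - k) = 0 :=
    sum_eq_zero fun k hk => by rw [C_of_neg (by simp at hk; omega), zero_mul]
  rw [add_assoc, sum_range_add, vanish, zero_add, ← sum_range_C_mul_C]
  refine sum_congr rfl fun j _ => ?_
  push_cast
  rw [add_sub_cancel_left, sub_add_eq_sub_sub]

theorem stmt_1 (a b c d m : ℕ) :
    ∑ k ∈ Finset.range (a + 1), C a k * C b ((m : ℤ) + k) * C k c * C ((m : ℤ) + k) d = C ((a : ℤ) + b - c - d) ((m : ℤ) + a - d) * C a c * C b d := by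
  have revise (k : ℕ) : C a k * C b ((m : ℤ) + k) * C k c * C ((m : ℤ) + k) d
      = C a c * C b d * (C ((a : ℤ) - c) ((k : ℤ) - c) * C ((b : ℤ) - d) ((m : ℤ) + k - d)) := by
    rw [mul_right_comm _ _ (C k c), C_mul_C, mul_assoc, C_mul_C]
    ring
  rw [sum_congr rfl fun k _ => revise k, ← mul_sum]
  obtain hac | ⟨i, rfl⟩ : a < c ∨ ∃ i, a = c + i :=
    (lt_or_ge a c).imp_right Nat.exists_eq_add_of_le
  · rw [C_of_lt (by omega : (a : ℤ) < c)]
    ring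
  obtain hbd | ⟨j, rfl⟩ : b < d ∨ ∃ j, b = d + j :=
    (lt_or_ge b d).imp_right Nat.exists_eq_add_of_le
  · rw [C_of_lt (by omega : (b : ℤ) < d)]
    ring
  have reflect (k : ℕ) : C j ((m : ℤ) + k - d) = C j ((j + d - m : ℤ) - k) := by
    rw [C_symm]
    ring_nf
  push_cast
  simp only [add_sub_cancel_left, reflect]
  rw [sum_range_C_sub_mul_C, C_symm ((c : ℤ) + i + (d + j) - c - d)]
  ring_nf
end

section
/- (Nanjundiah's first identity) For all natural numbers a, b, p, we have ∑_{k=0}^{a} C(a,k)·C(b,k)·C(p+k, a+b) = C(p,a)·C(p,b). -/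
/-!
Both sides equal `∑ⱼ C(a,j) C(a+b-j,a) C(p,a+b-j)`. On the right, this counts pairs of an
`a`-subset and a `b`-subset of a `p`-set by the size `j` of their intersection: choose the union,
of size `a+b-j`, then the `a`-subset inside it, then the `j` of its elements that are shared.
On the left, expand `C(p+k,a+b) = ∑ⱼ C(k,j) C(p,a+b-j)` by Vandermonde; the coefficient of
`C(p,a+b-j)` is then `∑ₖ C(a,k) C(k,j) C(b,k) = C(a,j) C(a+b-j,a)`, again by Vandermonde.
-/

open Finset

theorem C_natCast_s16 (x y : ℕ) : C x y = x.choose y := by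
  unfold C
  split_ifs with h
  · simp
  · rw [Nat.choose_eq_zero_of_lt (by omega), Nat.cast_zero]

namespace Nat

theorem add_choose_eq_sum_range (m n k : ℕ) :
    (m + n).choose k = ∑ j ∈ range (k + 1), m.choose j * n.choose (k - j) := by
  rw [add_choose_eq, Finset.Nat.sum_antidiagonal_eq_sum_range_succ_mk]

theorem choose_add_mul_choose_left (p a l : ℕ) :
    p.choose (a + l) * (a + l).choose a = p.choose a * (p - a).choose l := by
  simpa using choose_mul (n := p) (Nat.le_add_right a l)

theorem choose_mul_choose_eq_choose_mul_choose_sub {a j k : ℕ} (hj : j ≤ a) (hk : k ≤ a) :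
    a.choose k * k.choose j = a.choose j * (a - j).choose (a - k) := by
  rcases le_or_gt j k with hjk | hkj
  · rw [choose_mul hjk, ← choose_symm (show k - j ≤ a - j by omega)]
    congr 2
    omega
  · rw [choose_eq_zero_of_lt hkj, choose_eq_zero_of_lt (show a - j < a - k by omega)]
    simp

theorem sum_choose_mul_choose_mul_choose (a b j : ℕ) :
    ∑ k ∈ range (a + 1), a.choose k * k.choose j * b.choose k
      = a.choose j * (a + b - j).choose a := by
  rcases lt_or_ge a j with haj | hja
  · rw [choose_eq_zero_of_lt haj, zero_mul]
    exact sum_eq_zero fun k hk ↦ by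
      rw [choose_eq_zero_of_lt (n := k) (by simp at hk; omega), mul_zero, zero_mul]
  calc ∑ k ∈ range (a + 1), a.choose k * k.choose j * b.choose k
      = a.choose j * ∑ k ∈ range (a + 1), (a - j).choose (a - k) * b.choose k := by
        rw [mul_sum]
        refine sum_congr rfl fun k hk ↦ ?_
        rw [choose_mul_choose_eq_choose_mul_choose_sub hja (by simp at hk; omega), mul_assoc]
    _ = a.choose j * (a + b - j).choose a := by
        rw [Nat.sub_add_comm hja, add_choose_eq_sum_range, ← sum_range_reflect]
        refine congrArg _ (sum_congr rfl fun k hk ↦ ?_)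
        simp only [mem_range] at hk
        rw [show a + 1 - 1 - k = a - k by omega, Nat.sub_sub_self (by omega)]

theorem choose_mul_choose_eq_sum (p a b : ℕ) :
    p.choose a * p.choose b
      = ∑ j ∈ range (a + b + 1), a.choose j * (a + b - j).choose a * p.choose (a + b - j) := by
  calc p.choose a * p.choose b = p.choose a * (a + (p - a)).choose b := by
        rcases le_or_gt a p with hap | hpa
        · rw [Nat.add_sub_cancel' hap]
        · simp [choose_eq_zero_of_lt hpa]
    _ = ∑ j ∈ range (b + 1), a.choose j * (p.choose a * (p - a).choose (b - j)) := by
        rw [add_choose_eq_sum_range, mul_sum]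
        exact sum_congr rfl fun _ _ ↦ by ring
    _ = ∑ j ∈ range (b + 1), a.choose j * (a + b - j).choose a * p.choose (a + b - j) := by
        refine sum_congr rfl fun j hj ↦ ?_
        rw [← choose_add_mul_choose_left, show a + (b - j) = a + b - j by simp at hj; omega]
        ring
    _ = _ := by
        refine sum_subset (range_subset_range.2 (by omega)) fun j hj hjb ↦ ?_
        simp only [mem_range] at hj hjb
        rw [choose_eq_zero_of_lt (show a + b - j < a by omega), mul_zero, zero_mul]

theorem sum_choose_mul_choose_mul_add_choose_eq_sum (a b p : ℕ) :
    ∑ k ∈ range (a + 1), a.choose k * b.choose k * (p + k).choose (a + b)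
      = ∑ j ∈ range (a + b + 1), a.choose j * (a + b - j).choose a * p.choose (a + b - j) := by
  calc ∑ k ∈ range (a + 1), a.choose k * b.choose k * (p + k).choose (a + b)
      = ∑ k ∈ range (a + 1), ∑ j ∈ range (a + b + 1),
          a.choose k * k.choose j * b.choose k * p.choose (a + b - j) := by
        refine sum_congr rfl fun k _ ↦ ?_
        rw [add_comm p, add_choose_eq_sum_range, mul_sum]
        exact sum_congr rfl fun _ _ ↦ by ring
    _ = ∑ j ∈ range (a + b + 1), a.choose j * (a + b - j).choose a * p.choose (a + b - j) := by
        rw [sum_comm]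
        refine sum_congr rfl fun j _ ↦ ?_
        rw [← sum_mul, sum_choose_mul_choose_mul_choose]

theorem sum_choose_mul_choose_mul_add_choose (a b p : ℕ) :
    ∑ k ∈ range (a + 1), a.choose k * b.choose k * (p + k).choose (a + b)
      = p.choose a * p.choose b := by
  rw [sum_choose_mul_choose_mul_add_choose_eq_sum, choose_mul_choose_eq_sum]

end Nat

theorem stmt_16 (a b p : ℕ) :
    ∑ k ∈ Finset.range (a + 1), C a k * C b k * C ((p : ℤ) + k) ((a : ℤ) + b) = C p a * C p b := by
  simp only [← Nat.cast_add, C_natCast_s16]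
  exact_mod_cast Nat.sum_choose_mul_choose_mul_add_choose a b p
end
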